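/- arXiv:2505.05324 — 3 statements merged into one kernel-verified Lean document; each statement's English description precedes it below -/
import Mathlib

section
/- For any flats F ⊆ G of the matroid M_{A^!}, the map ρ_{FG} : 𝔽[x_e : e ∈ G] → 𝔽[x_e : e ∈ F] sending x_e ↦ 0 for e ∈ G∖F and x_e ↦ x_e for e ∈ F satisfies ρ_{FG}(G(A^!_G)) ⊆ G(A^!_F); consequently ρ_{FG} descends to a graded algebra homomorphism OT(A^!_G) → OT(A^!_F). -/
open MvPolynomial

noncomputable section

variable {𝔽 : Type*} {ι : Type*}

def suppSet [Zero 𝔽] (α : ι → 𝔽) : Set ι := {e | α e ≠ 0}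

def mSize [Zero 𝔽] (α : ι → 𝔽) : ℕ := (suppSet α).ncard

/-- `C` is a circuit of the matroid `M_{A^!}`: the support of a support-minimal
nonzero element of `L`. -/
def IsCircuit [CommSemiring 𝔽] (L : Submodule 𝔽 (ι → 𝔽)) (Cs : Set ι) : Prop :=
  (∃ α ∈ L, α ≠ 0 ∧ suppSet α = Cs) ∧
    ∀ β ∈ L, β ≠ 0 → suppSet β ⊆ Cs → suppSet β = Cs

/-- `F` is a flat of the matroid `M_{A^!}`: no circuit has exactly one element
outside of `F`. -/
def IsFlat [CommSemiring 𝔽] (L : Submodule 𝔽 (ι → 𝔽)) (F : Set ι) : Prop :=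
  ∀ Cs : Set ι, IsCircuit L Cs → (Cs \ F).ncard ≠ 1

/-- `ρ_F : 𝔽[x_e : e ∈ E] → 𝔽[x_e : e ∈ F]`, sending `x_e ↦ x_e` for `e ∈ F` and
`x_e ↦ 0` otherwise.  Its restriction to polynomials supported on `G ⊇ F` is `ρ_{FG}`. -/
def rhoMap [CommSemiring 𝔽] (F : Set ι) :
    MvPolynomial ι 𝔽 →ₐ[𝔽] MvPolynomial ι 𝔽 :=
  aeval (F.indicator fun e => X e)


def dotL [Field 𝔽] [Fintype ι] (w : ι → 𝔽) : (ι → 𝔽) →ₗ[𝔽] 𝔽 where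
  toFun v := ∑ e, w e * v e
  map_add' a b := by simp [mul_add, Finset.sum_add_distrib]
  map_smul' r a := by
    simp only [Pi.smul_apply, smul_eq_mul, RingHom.id_apply]
    rw [Finset.mul_sum]
    exact Finset.sum_congr rfl fun e _ => by ring

@[simp] lemma dotL_apply [Field 𝔽] [Fintype ι] (w v : ι → 𝔽) :
    dotL w v = ∑ e, w e * v e := rfl

lemma sum_mul_single [Field 𝔽] [Fintype ι] [DecidableEq ι] (μ : ι → 𝔽) (e : ι) :
    ∑ x, μ x * (Pi.single e (1 : 𝔽) : ι → 𝔽) x = μ e := by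
  classical
  simp [Pi.single_apply, mul_ite, mul_one, mul_zero]

def perpSub [Field 𝔽] [Fintype ι] (L : Submodule 𝔽 (ι → 𝔽)) (G F : Set ι) :
    Submodule 𝔽 (ι → 𝔽) where
  carrier := {θ | (∀ α ∈ L, (∀ e ∉ G, α e = 0) → ∑ e, θ e * α e = 0) ∧ ∀ e ∈ F, θ e = 0}
  zero_mem' := ⟨fun α _ _ => by simp, fun e _ => rfl⟩
  add_mem' := by
    rintro a b ⟨ha1, ha2⟩ ⟨hb1, hb2⟩
    refine ⟨fun α hα h => ?_, fun e he => by simp [ha2 e he, hb2 e he]⟩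
    have : ∑ e, (a + b) e * α e = ∑ e, a e * α e + ∑ e, b e * α e := by
      rw [← Finset.sum_add_distrib]
      exact Finset.sum_congr rfl fun e _ => by simp [add_mul]
    rw [this, ha1 α hα h, hb1 α hα h, add_zero]
  smul_mem' := by
    rintro c θ ⟨h1, h2⟩
    refine ⟨fun α hα h => ?_, fun e he => by simp [h2 e he]⟩
    have : ∑ e, (c • θ) e * α e = c * ∑ e, θ e * α e := by
      rw [Finset.mul_sum]
      exact Finset.sum_congr rfl fun e _ => by simp [mul_assoc]
    rw [this, h1 α hα h, mul_zero]

lemma mem_perpSub [Field 𝔽] [Fintype ι] (L : Submodule 𝔽 (ι → 𝔽)) (G F : Set ι)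
    (θ : ι → 𝔽) : θ ∈ perpSub L G F ↔
      (∀ α ∈ L, (∀ e ∉ G, α e = 0) → ∑ e, θ e * α e = 0) ∧ ∀ e ∈ F, θ e = 0 :=
  Iff.rfl

lemma func_repr [Field 𝔽] [Fintype ι] [DecidableEq ι] (g : (ι → 𝔽) →ₗ[𝔽] 𝔽) (v : ι → 𝔽) :
    g v = ∑ e, g (Pi.single e 1) * v e := by
  nth_rewrite 1 [← Finset.univ_sum_single v]
  rw [map_sum]
  refine Finset.sum_congr rfl fun e _ => ?_
  have h : Pi.single e (v e) = v e • (Pi.single e (1 : 𝔽) : ι → 𝔽) := by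
    funext x
    by_cases hx : x = e
    · subst hx; simp
    · simp [Pi.single_eq_of_ne hx]
  rw [h, map_smul, smul_eq_mul, mul_comm]

lemma exists_perp_ne [Field 𝔽] [Fintype ι] [DecidableEq ι] (P : Submodule 𝔽 (ι → 𝔽)) (x : ι → 𝔽)
    (hx : x ∉ P) :
    ∃ μ : ι → 𝔽, (∀ α ∈ P, ∑ e, μ e * α e = 0) ∧ ∑ e, μ e * x e ≠ 0 := by
  have hq : P.mkQ x ≠ 0 := by
    simpa [Submodule.mkQ_apply, Submodule.Quotient.mk_eq_zero] using hx
  obtain ⟨φ, hφ⟩ : ∃ φ : Module.Dual 𝔽 ((ι → 𝔽) ⧸ P), φ (P.mkQ x) ≠ 0 := by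
    by_contra h
    push_neg at h
    exact hq ((Module.forall_dual_apply_eq_zero_iff 𝔽 _).mp h)
  refine ⟨fun e => (φ ∘ₗ P.mkQ) (Pi.single e 1), fun α hα => ?_, ?_⟩
  · rw [← func_repr]
    simp [Submodule.mkQ_apply, (Submodule.Quotient.mk_eq_zero P).mpr hα]
  · rw [← func_repr]
    exact hφ

lemma exists_supported_repr [Field 𝔽] [Fintype ι] [DecidableEq ι] (P : Submodule 𝔽 (ι → 𝔽)) (S : Set ι)
    (c : P →ₗ[𝔽] 𝔽) (hc : ∀ α : P, (∀ e ∈ S, (α : ι → 𝔽) e = 0) → c α = 0) :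
    ∃ μ : ι → 𝔽, (∀ e ∉ S, μ e = 0) ∧ ∀ α : P, ∑ e, μ e * (α : ι → 𝔽) e = c α := by
  classical
  let I : (ι → 𝔽) →ₗ[𝔽] (ι → 𝔽) :=
    { toFun := fun v e => if e ∈ S then v e else 0
      map_add' := by intro a b; funext e; by_cases h : e ∈ S <;> simp [h]
      map_smul' := by intro r a; funext e; by_cases h : e ∈ S <;> simp [h] }
  let T : P →ₗ[𝔽] (ι → 𝔽) := I ∘ₗ P.subtype
  have hker : LinearMap.ker T ≤ LinearMap.ker c := by
    intro α hα
    rw [LinearMap.mem_ker] at hα ⊢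
    apply hc
    intro e he
    have h2 := congrFun (congrArg (fun f : ι → 𝔽 => f) hα) e
    simpa [T, I, he] using h2
  let cbar := (LinearMap.ker T).liftQ c hker
  let eqv := T.quotKerEquivRange
  let c' : LinearMap.range T →ₗ[𝔽] 𝔽 := cbar ∘ₗ (eqv.symm : _ →ₗ[𝔽] _)
  obtain ⟨g, hg⟩ := c'.exists_extend
  refine ⟨fun e => if e ∈ S then g (Pi.single e 1) else 0,
    fun e he => by simp [he], fun α => ?_⟩
  have h1 : ∑ e, (if e ∈ S then g (Pi.single e 1) else 0) * (α : ι → 𝔽) e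
      = ∑ e, g (Pi.single e 1) * (T α) e := by
    refine Finset.sum_congr rfl fun e _ => ?_
    by_cases h : e ∈ S <;> simp [T, I, h]
  rw [h1, ← func_repr]
  have h2 : g (T α) = c' ⟨T α, LinearMap.mem_range_self T α⟩ := by
    have h3 := congrArg
      (fun f : LinearMap.range T →ₗ[𝔽] 𝔽 => f ⟨T α, LinearMap.mem_range_self T α⟩) hg
    simpa using h3
  rw [h2]
  have h3 : (⟨T α, LinearMap.mem_range_self T α⟩ : LinearMap.range T)
      = eqv (Submodule.Quotient.mk α) := by
    apply Subtype.ext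
    exact (LinearMap.quotKerEquivRange_apply_mk T α).symm
  rw [h3]
  simp [c', cbar, Submodule.liftQ_apply]

lemma avoid [Field 𝔽] [Fintype ι] [Infinite 𝔽] (W : Submodule 𝔽 (ι → 𝔽)) (B : Finset ι)
    (h : ∀ e ∈ B, ∃ θ ∈ W, θ e ≠ 0) : ∃ θ ∈ W, ∀ e ∈ B, θ e ≠ 0 := by
  classical
  induction B using Finset.induction with
  | empty => exact ⟨0, W.zero_mem, by simp⟩
  | @insert a B ha ih =>
    obtain ⟨θ, hθW, hθ⟩ := ih (fun e he => h e (Finset.mem_insert_of_mem he))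
    obtain ⟨θ', hθ'W, hθ'a⟩ := h a (Finset.mem_insert_self a B)
    obtain ⟨c, hc⟩ := Infinite.exists_notMem_finset
      (Finset.image (fun f => -θ f / θ' f) (insert a B) ∪ {0})
    refine ⟨θ + c • θ', W.add_mem hθW (W.smul_mem c hθ'W), ?_⟩
    have hc0 : c ≠ 0 := by
      intro h0; exact hc (by simp [h0])
    intro f hf
    have hcb : c ≠ -θ f / θ' f := by
      intro h0
      exact hc (Finset.mem_union_left _ (Finset.mem_image.mpr ⟨f, hf, h0.symm⟩))
    simp only [Pi.add_apply, Pi.smul_apply, smul_eq_mul]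
    by_cases hθ'f : θ' f = 0
    · rcases Finset.mem_insert.mp hf with rfl | hfB
      · exact absurd hθ'f hθ'a
      · simpa [hθ'f] using hθ f hfB
    · intro h0
      have hce : c * θ' f = -θ f := by linear_combination h0
      exact hcb ((eq_div_iff hθ'f).mpr hce)


def coordSub [Field 𝔽] (S : Set ι) : Submodule 𝔽 (ι → 𝔽) where
  carrier := {α | ∀ e ∉ S, α e = 0}
  add_mem' := by
    intro a b ha hb e he
    simp [Pi.add_apply, ha e he, hb e he]
  zero_mem' := fun e _ => rfl
  smul_mem' := by
    intro c α hα e he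
    simp [Pi.smul_apply, hα e he]

lemma exists_circuit_mem [Field 𝔽] [Fintype ι] (L : Submodule 𝔽 (ι → 𝔽)) (α : ι → 𝔽)
    (hα : α ∈ L) (e : ι) (he : α e ≠ 0) :
    ∃ Cs, IsCircuit L Cs ∧ e ∈ Cs ∧ Cs ⊆ suppSet α := by
  classical
  set N : Set ℕ := {n | ∃ β ∈ L, β e ≠ 0 ∧ suppSet β ⊆ suppSet α ∧ (suppSet β).ncard = n}
    with hN
  have hNne : N.Nonempty := ⟨(suppSet α).ncard, α, hα, he, subset_rfl, rfl⟩
  obtain ⟨β, hβL, hβe, hβα, hβcard⟩ : ∃ β ∈ L, β e ≠ 0 ∧ suppSet β ⊆ suppSet α ∧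
      (suppSet β).ncard = sInf N := Nat.sInf_mem hNne
  have hβ0 : β ≠ 0 := fun h => hβe (by simp [h])
  have hmin : ∀ γ ∈ L, γ e ≠ 0 → suppSet γ ⊆ suppSet α → ¬ suppSet γ ⊂ suppSet β := by
    intro γ hγL hγe hγα hss
    have hlt : (suppSet γ).ncard < (suppSet β).ncard :=
      Set.ncard_lt_ncard hss (Set.toFinite _)
    have : (suppSet γ).ncard ∈ N := ⟨γ, hγL, hγe, hγα, rfl⟩
    have := Nat.sInf_le this
    omega
  refine ⟨suppSet β, ⟨⟨β, hβL, hβ0, rfl⟩, ?_⟩, hβe, hβα⟩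
  intro γ hγL hγ0 hγβ
  by_contra hne
  have hss : suppSet γ ⊂ suppSet β := ⟨hγβ, fun h => hne (le_antisymm hγβ h)⟩
  by_cases hγe : γ e ≠ 0
  · exact hmin γ hγL hγe (hγβ.trans hβα) hss
  · push_neg at hγe
    obtain ⟨f, hf⟩ : ∃ f, γ f ≠ 0 := by
      by_contra h
      push_neg at h
      exact hγ0 (funext h)
    set δ : ι → 𝔽 := β - (β f / γ f) • γ with hδ
    have hδL : δ ∈ L := L.sub_mem hβL (L.smul_mem _ hγL)
    have hδe : δ e ≠ 0 := by
      simp [hδ, Pi.sub_apply, Pi.smul_apply, smul_eq_mul, hγe, hβe]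
    have hδf : δ f = 0 := by
      simp only [hδ, Pi.sub_apply, Pi.smul_apply, smul_eq_mul]
      field_simp
      ring
    have hδβ : suppSet δ ⊆ suppSet β := by
      intro x hx
      by_contra hxβ
      have hxβ' : β x = 0 := by simpa [suppSet] using hxβ
      have hxγ : γ x = 0 := by
        by_contra hxγ
        exact hxβ (hγβ hxγ)
      exact hx (by simp [hδ, hxβ', hxγ])
    have hssδ : suppSet δ ⊂ suppSet β := by
      refine ⟨hδβ, fun h => ?_⟩
      have : (f : ι) ∈ suppSet δ := h (hγβ hf)
      exact this hδf
    exact hmin δ hδL hδe (hδβ.trans hβα) hssδ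


lemma eval_rhoMap [CommSemiring 𝔽] (S : Set ι) (v : ι → 𝔽) (q : MvPolynomial ι 𝔽) :
    eval v (rhoMap S q) = eval (S.indicator v) q := by
  induction q using MvPolynomial.induction_on with
  | C a => simp [rhoMap]
  | add q r hq hr => simp [map_add, hq, hr]
  | mul_X q e hq =>
    by_cases he : e ∈ S
    · simp [rhoMap, map_mul, Set.indicator_of_mem he, ← hq, rhoMap]
    · simp [rhoMap, map_mul, Set.indicator_of_notMem he, ← hq, rhoMap]

lemma rhoMap_mem_supported [CommSemiring 𝔽] [Nontrivial 𝔽] (S : Set ι)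
    (q : MvPolynomial ι 𝔽) : rhoMap S q ∈ supported 𝔽 S := by
  induction q using MvPolynomial.induction_on with
  | C a => simpa [rhoMap] using Subalgebra.algebraMap_mem (supported 𝔽 S) a
  | add q r hq hr => rw [map_add]; exact add_mem hq hr
  | mul_X q e hq =>
    rw [map_mul]
    by_cases he : e ∈ S
    · refine mul_mem hq ?_
      have : rhoMap S (X e : MvPolynomial ι 𝔽) = X e := by
        simp [rhoMap, Set.indicator_of_mem he]
      rw [this]
      exact X_mem_supported.mpr he
    · have : rhoMap S (X e : MvPolynomial ι 𝔽) = 0 := by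
        simp [rhoMap, Set.indicator_of_notMem he]
      rw [this, mul_zero]
      exact zero_mem _

lemma key_vanish [Field 𝔽] [Infinite 𝔽] [Fintype ι] (F G : Set ι) (hFG : F ⊆ G)
    (p : MvPolynomial ι 𝔽) (ξ ξ' θ : ι → 𝔽)
    (hξF : ∀ e ∈ F, ξ e ≠ 0)
    (hξ'F : ∀ e ∈ F, ξ' e = ξ e)
    (hθF : ∀ e ∈ F, θ e = 0)
    (hθG : ∀ e ∈ G, e ∉ F → θ e ≠ 0)
    (hvan : ∀ s : 𝔽, s ≠ 0 → (∀ e ∈ G, ξ' e + s⁻¹ * θ e ≠ 0) →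
      eval (G.indicator fun e => (ξ' e + s⁻¹ * θ e)⁻¹) p = 0) :
    eval (F.indicator fun e => (ξ e)⁻¹) p = 0 := by
  classical
  set k := p.totalDegree with hk
  set n : ι → Polynomial 𝔽 := fun e =>
    if e ∈ F then Polynomial.C (ξ e)⁻¹
    else if e ∈ G then Polynomial.C (θ e)⁻¹ * Polynomial.X else 0 with hn
  set d : ι → Polynomial 𝔽 := fun e =>
    if e ∈ G ∧ e ∉ F then Polynomial.C ((θ e)⁻¹ * ξ' e) * Polynomial.X + 1 else 1 with hd
  set Q : Polynomial 𝔽 :=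
    ∑ m ∈ p.support, Polynomial.C (MvPolynomial.coeff m p) *
      ∏ e, n e ^ m e * d e ^ (k - m e) with hQ
  have hmle : ∀ m ∈ p.support, ∀ e : ι, m e ≤ k := by
    intro m hm e
    refine le_trans ?_ (MvPolynomial.le_totalDegree hm)
    by_cases h : e ∈ m.support
    · exact Finset.single_le_sum (f := fun e => m e) (fun _ _ => Nat.zero_le _) h
    · simp [Finsupp.notMem_support_iff.mp h]
  have hdval : ∀ (s : 𝔽) (e : ι), e ∈ G → e ∉ F →
      Polynomial.eval s (d e) = (θ e)⁻¹ * ξ' e * s + 1 := by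
    intro s e heG heF
    simp [hd, heG, heF]
  have hevalQ : ∀ s : 𝔽, Polynomial.eval s Q =
      ∑ m ∈ p.support, MvPolynomial.coeff m p *
        ∏ e, (Polynomial.eval s (n e)) ^ m e * (Polynomial.eval s (d e)) ^ (k - m e) := by
    intro s
    rw [hQ, Polynomial.eval_finset_sum]
    refine Finset.sum_congr rfl fun m _ => ?_
    rw [Polynomial.eval_mul, Polynomial.eval_C, Polynomial.eval_prod]
    congr 1
    exact Finset.prod_congr rfl fun e _ => by rw [Polynomial.eval_mul,
      Polynomial.eval_pow, Polynomial.eval_pow]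
  have hgood : ∀ s : 𝔽, s ≠ 0 →
      (∀ e, e ∈ G → e ∉ F → Polynomial.eval s (d e) ≠ 0) → Polynomial.eval s Q = 0 := by
    intro s hs hds
    set η : ι → 𝔽 := fun e => ξ' e + s⁻¹ * θ e with hη
    have hηF : ∀ e ∈ F, η e = ξ e := by
      intro e heF
      simp [hη, hθF e heF, hξ'F e heF]
    have hηG : ∀ e, e ∈ G → e ∉ F → η e = θ e * Polynomial.eval s (d e) * s⁻¹ := by
      intro e heG heF
      rw [hdval s e heG heF]
      have hθ := hθG e heG heF
      simp only [hη]
      have h2 : θ e * ((θ e)⁻¹ * ξ' e * s + 1) = ξ' e * s + θ e := by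
        rw [mul_add, mul_one, ← mul_assoc, ← mul_assoc, mul_inv_cancel₀ hθ, one_mul]
      rw [h2, add_mul, mul_inv_cancel_right₀ hs]
      ring
    have hηne : ∀ e ∈ G, η e ≠ 0 := by
      intro e heG
      by_cases heF : e ∈ F
      · rw [hηF e heF]; exact hξF e heF
      · rw [hηG e heG heF]
        exact mul_ne_zero (mul_ne_zero (hθG e heG heF) (hds e heG heF)) (inv_ne_zero hs)
    have hvp := hvan s hs hηne
    rw [hevalQ s]
    have hfac : ∀ m ∈ p.support,
        ∏ e, (Polynomial.eval s (n e)) ^ m e * (Polynomial.eval s (d e)) ^ (k - m e)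
        = (∏ e, Polynomial.eval s (d e)) ^ k *
          ∏ e, (G.indicator (fun e => (η e)⁻¹) e) ^ m e := by
      intro m hm
      rw [← Finset.prod_pow, ← Finset.prod_mul_distrib]
      refine Finset.prod_congr rfl fun e _ => ?_
      by_cases heF : e ∈ F
      · have heG := hFG heF
        rw [Set.indicator_of_mem heG, hηF e heF]
        have hne : n e = Polynomial.C (ξ e)⁻¹ := by simp [hn, heF]
        have hde : d e = 1 := by simp [hd, heF]
        rw [hne, hde]
        simp
      · by_cases heG : e ∈ G
        · rw [Set.indicator_of_mem heG, hηG e heG heF]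
          have hD : Polynomial.eval s (d e) ≠ 0 := hds e heG heF
          have hnval : Polynomial.eval s (n e) = (θ e)⁻¹ * s := by
            simp [hn, heF, heG]
          rw [hnval]
          have hθ := hθG e heG heF
          have hinv : (θ e * Polynomial.eval s (d e) * s⁻¹)⁻¹
              = (θ e)⁻¹ * s / Polynomial.eval s (d e) := by
            field_simp
            try ring
          rw [hinv, div_pow]
          have hDk : Polynomial.eval s (d e) ^ k
              = Polynomial.eval s (d e) ^ m e * Polynomial.eval s (d e) ^ (k - m e) :=
            (pow_mul_pow_sub _ (hmle m hm e)).symm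
          rw [hDk]
          field_simp
          try ring
        · rw [Set.indicator_of_notMem heG]
          have hnval : Polynomial.eval s (n e) = 0 := by simp [hn, heF, heG]
          have hdval' : Polynomial.eval s (d e) = 1 := by simp [hd, heG]
          rw [hnval, hdval']
          simp
    calc ∑ m ∈ p.support, MvPolynomial.coeff m p *
          ∏ e, (Polynomial.eval s (n e)) ^ m e * (Polynomial.eval s (d e)) ^ (k - m e)
        = (∏ e, Polynomial.eval s (d e)) ^ k * ∑ m ∈ p.support, MvPolynomial.coeff m p *
            ∏ e, (G.indicator (fun e => (η e)⁻¹) e) ^ m e := by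
          rw [Finset.mul_sum]
          refine Finset.sum_congr rfl fun m hm => ?_
          rw [hfac m hm]
          ring
      _ = 0 := by
          rw [← MvPolynomial.eval_eq', hvp, mul_zero]
  have hQ0 : Q = 0 := by
    apply Polynomial.eq_zero_of_infinite_isRoot
    have hbad : (({0} ∪ Set.range fun e : ι => -((θ e)⁻¹ * ξ' e)⁻¹ : Set 𝔽)).Finite :=
      (Set.finite_singleton 0).union (Set.finite_range _)
    refine Set.Infinite.mono ?_ hbad.infinite_compl
    intro s hs
    simp only [Set.mem_compl_iff, Set.mem_union, Set.mem_singleton_iff, Set.mem_range,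
      not_or, not_exists] at hs
    obtain ⟨hs0, hsr⟩ := hs
    refine hgood s hs0 ?_
    intro e heG heF hzero
    rw [hdval s e heG heF] at hzero
    set ce := (θ e)⁻¹ * ξ' e with hce
    have hcne : ce ≠ 0 := by
      intro h0
      rw [h0] at hzero
      simp at hzero
    apply hsr e
    rw [← hce]
    have h5 : ce * s = -1 := by linear_combination hzero
    have h4 : ce * s = ce * -ce⁻¹ := by
      rw [h5, mul_neg, mul_inv_cancel₀ hcne]
    exact (mul_left_cancel₀ hcne h4).symm
  have h0 : Polynomial.eval 0 Q = MvPolynomial.eval (F.indicator fun e => (ξ e)⁻¹) p := by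
    rw [hevalQ 0, MvPolynomial.eval_eq']
    refine Finset.sum_congr rfl fun m hm => ?_
    congr 1
    refine Finset.prod_congr rfl fun e _ => ?_
    have hd0 : Polynomial.eval 0 (d e) = 1 := by
      by_cases h : e ∈ G ∧ e ∉ F <;> simp [hd, h]
    rw [hd0, one_pow, mul_one]
    congr 1
    by_cases heF : e ∈ F
    · simp [hn, heF, Set.indicator_of_mem heF]
    · by_cases heG : e ∈ G <;>
        simp [hn, heF, heG, Set.indicator_of_notMem heF]
  rw [← h0, hQ0, Polynomial.eval_zero]


/-- The kernel `G(A^!_F)` of `Φ_F : 𝔽[x_e : e ∈ F] → OT(A^!_F)` (as a subset of the full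
polynomial ring): polynomials supported on `F` that vanish at all points `((ξ_e)⁻¹)_{e ∈ F}`
with `ξ` a point of `L^⊥_F = (L ∩ 𝔽^F)^⊥` whose `F`-coordinates are all nonzero. -/
def OTkerLoc [Field 𝔽] [Fintype ι] (L : Submodule 𝔽 (ι → 𝔽)) (F : Set ι) :
    Ideal (MvPolynomial ι 𝔽) :=
  ⨅ ξ ∈ {ξ : ι → 𝔽 | (∀ α ∈ L, (∀ e ∉ F, α e = 0) → ∑ e, ξ e * α e = 0) ∧
      ∀ e ∈ F, ξ e ≠ 0},
    RingHom.ker (eval (F.indicator fun e => (ξ e)⁻¹))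

/-- for flats `F ⊆ G` of `M_{A^!}`, the map `ρ_{FG}` carries `G(A^!_G)`
into `G(A^!_F)` (in particular it maps `𝔽[x_e : e ∈ G]` into `𝔽[x_e : e ∈ F]`); hence it
descends to a graded algebra homomorphism `OT(A^!_G) → OT(A^!_F)`. -/
theorem statement6 [Field 𝔽] [CharZero 𝔽] [Fintype ι] (L : Submodule 𝔽 (ι → 𝔽))
    (hL : ∀ α ∈ L, α ≠ 0 → mSize α ≠ 1)
    (F G : Set ι) (hF : IsFlat L F) (hG : IsFlat L G) (hFG : F ⊆ G) :
    ∀ p ∈ MvPolynomial.supported 𝔽 G, p ∈ OTkerLoc L G →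
      rhoMap F p ∈ MvPolynomial.supported 𝔽 F ∧ rhoMap F p ∈ OTkerLoc L F := by
  classical
  intro p hpsup hp
  refine ⟨rhoMap_mem_supported F p, ?_⟩
  simp only [OTkerLoc, Submodule.mem_iInf, Set.mem_setOf_eq, RingHom.mem_ker] at hp ⊢
  rintro ξ ⟨hξ1, hξ2⟩
  rw [eval_rhoMap, Set.indicator_indicator, Set.inter_self]
  -- the subspace of elements of `L` supported on `G`
  set U : Submodule 𝔽 (ι → 𝔽) := L ⊓ coordSub G with hU
  -- construct the extension ξ' of ξ annihilating U
  set c : ↥U →ₗ[𝔽] 𝔽 := -((dotL (F.indicator ξ)) ∘ₗ U.subtype) with hc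
  have hcmem : ∀ α : ↥U, (∀ e ∈ (Fᶜ : Set ι), (α : ι → 𝔽) e = 0) → c α = 0 := by
    intro α hα0
    have hsum : ∑ e, (F.indicator ξ) e * (α : ι → 𝔽) e = ∑ e, ξ e * (α : ι → 𝔽) e := by
      refine Finset.sum_congr rfl fun e _ => ?_
      by_cases he : e ∈ F
      · rw [Set.indicator_of_mem he]
      · rw [hα0 e he, mul_zero, mul_zero]
    have hαL : (α : ι → 𝔽) ∈ L := (Submodule.mem_inf.mp α.2).1
    have hαF : ∀ e ∉ F, (α : ι → 𝔽) e = 0 := fun e he => hα0 e he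
    have h0 := hξ1 (α : ι → 𝔽) hαL hαF
    simp only [hc, LinearMap.neg_apply, LinearMap.coe_comp, Function.comp_apply,
      Submodule.coe_subtype, dotL_apply]
    rw [hsum, h0, neg_zero]
  obtain ⟨μ, hμ1, hμ2⟩ := exists_supported_repr U (Fᶜ : Set ι) c hcmem
  set ξ' : ι → 𝔽 := F.indicator ξ + μ with hξ'
  have hξ'F : ∀ e ∈ F, ξ' e = ξ e := by
    intro e he
    have hμe : μ e = 0 := hμ1 e (by simp [he])
    simp [hξ', Set.indicator_of_mem he, hμe]
  have hξ'ann : ∀ α ∈ L, (∀ e ∉ G, α e = 0) → ∑ e, ξ' e * α e = 0 := by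
    intro α hαL hαv
    have hαU : α ∈ U := Submodule.mem_inf.mpr ⟨hαL, hαv⟩
    have h2 := hμ2 ⟨α, hαU⟩
    simp only [hc, LinearMap.neg_apply, LinearMap.coe_comp, Function.comp_apply,
      Submodule.coe_subtype, dotL_apply] at h2
    have h3 : ∑ e, ξ' e * α e
        = ∑ e, (F.indicator ξ) e * α e + ∑ e, μ e * α e := by
      rw [← Finset.sum_add_distrib]
      exact Finset.sum_congr rfl fun e _ => by simp [hξ', add_mul]
    rw [h3, h2, add_neg_cancel]
  -- construct θ
  have hWe : ∀ e, e ∈ G → e ∉ F → ∃ θ' ∈ perpSub L G F, θ' e ≠ 0 := by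
    intro e heG heF
    have hx : Pi.single e (1 : 𝔽) ∉ U ⊔ coordSub F := by
      intro hmem
      obtain ⟨α, hαU, v, hv, hsum⟩ := Submodule.mem_sup.mp hmem
      have hαL : α ∈ L := (Submodule.mem_inf.mp hαU).1
      have hve : v e = 0 := hv e heF
      have hαe : α e ≠ 0 := by
        have h4 := congrFun hsum e
        simp only [Pi.add_apply, hve, add_zero, Pi.single_eq_same] at h4
        rw [h4]
        exact one_ne_zero
      obtain ⟨Cs, hCs, heCs, hCssub⟩ := exists_circuit_mem L α hαL e hαe
      apply hF Cs hCs
      have hCsF : Cs \ F = {e} := by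
        apply Set.Subset.antisymm
        · intro x hx2
          by_contra hxe
          have hxsupp := hCssub hx2.1
          have hvx : v x = 0 := hv x hx2.2
          have h5 := congrFun hsum x
          simp only [Pi.add_apply, hvx, add_zero] at h5
          rw [Pi.single_eq_of_ne hxe] at h5
          exact hxsupp h5
        · intro x hx2
          rw [Set.mem_singleton_iff] at hx2
          subst hx2
          exact ⟨heCs, heF⟩
      rw [hCsF, Set.ncard_singleton]
    obtain ⟨μ', hμ'1, hμ'2⟩ := exists_perp_ne (U ⊔ coordSub F) (Pi.single e 1) hx
    refine ⟨μ', ⟨?_, ?_⟩, ?_⟩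
    · intro α hαL hαv
      exact hμ'1 α (Submodule.mem_sup_left (Submodule.mem_inf.mpr ⟨hαL, hαv⟩))
    · intro x hxF
      have hsx : Pi.single x (1 : 𝔽) ∈ coordSub F := by
        intro y hy
        have hyx : y ≠ x := fun h => hy (h ▸ hxF)
        exact Pi.single_eq_of_ne hyx 1
      have h0 := hμ'1 (Pi.single x 1) (Submodule.mem_sup_right hsx)
      rwa [sum_mul_single] at h0
    · rwa [sum_mul_single] at hμ'2
  have hGFfin : (G \ F).Finite := Set.toFinite _
  obtain ⟨θ, hθW, hθB⟩ := avoid (perpSub L G F) hGFfin.toFinset (by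
    intro e he
    rw [Set.Finite.mem_toFinset] at he
    exact hWe e he.1 he.2)
  have hθann : ∀ α ∈ L, (∀ e ∉ G, α e = 0) → ∑ e, θ e * α e = 0 :=
    ((mem_perpSub L G F θ).mp hθW).1
  have hθF : ∀ e ∈ F, θ e = 0 := ((mem_perpSub L G F θ).mp hθW).2
  have hθG : ∀ e ∈ G, e ∉ F → θ e ≠ 0 := by
    intro e heG heF
    exact hθB e (hGFfin.mem_toFinset.mpr ⟨heG, heF⟩)
  refine key_vanish F G hFG p ξ ξ' θ hξ2 hξ'F hθF hθG ?_
  intro s hs hne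
  refine hp (fun e => ξ' e + s⁻¹ * θ e) ⟨?_, hne⟩
  intro α hαL hαv
  have h1 := hξ'ann α hαL hαv
  have h2 := hθann α hαL hαv
  calc ∑ e, (ξ' e + s⁻¹ * θ e) * α e
      = ∑ e, (ξ' e * α e + s⁻¹ * (θ e * α e)) :=
        Finset.sum_congr rfl fun e _ => by ring
    _ = ∑ e, ξ' e * α e + s⁻¹ * ∑ e, θ e * α e := by
        rw [Finset.sum_add_distrib, ← Finset.mul_sum]
    _ = 0 := by rw [h1, h2, mul_zero, add_zero]

end
end

section
/- Fix a total order < on E. For any flats F ⊆ G of the matroid M_{A^!}, the map ρ_{FG} : 𝔽[x_e : e ∈ G] → 𝔽[x_e : e ∈ F] sending x_e ↦ 0 for e ∈ G∖F and x_e ↦ x_e for e ∈ F satisfies ρ_{FG}(G_<(A^!_G)) ⊆ G_<(A^!_F); consequently ρ_{FG} descends to a graded algebra homomorphism SR_<(A^!_G) → SR_<(A^!_F). -/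
open MvPolynomial

noncomputable section

variable {𝔽 : Type*} {ι : Type*}

/-- The broken-circuit ideal `G_<(A^!_F)` (as an ideal of the full polynomial ring),
generated by the monomials `∏_{f ∈ C \ {max C}} x_f` for circuits `C ⊆ F` of `M_{A^!}`. -/
def bcIdealLoc [CommRing 𝔽] [LinearOrder ι] (L : Submodule 𝔽 (ι → 𝔽)) (F : Set ι) :
    Ideal (MvPolynomial ι 𝔽) :=
  Ideal.span {q | ∃ Cf : Finset ι, IsCircuit L (Cf : Set ι) ∧ (Cf : Set ι) ⊆ F ∧
    ∃ h : Cf.Nonempty, q = ∏ f ∈ Cf.erase (Cf.max' h), X f}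

/-- fix a total order on `E`.  For flats `F ⊆ G` of `M_{A^!}`, the map
`ρ_{FG}` carries the broken-circuit ideal `G_<(A^!_G)` into `G_<(A^!_F)` (in particular it
maps `𝔽[x_e : e ∈ G]` into `𝔽[x_e : e ∈ F]`); hence it descends to a graded algebra
homomorphism `SR_<(A^!_G) → SR_<(A^!_F)`. -/
theorem statement7 [Field 𝔽] [CharZero 𝔽] [Fintype ι] [LinearOrder ι]
    (L : Submodule 𝔽 (ι → 𝔽))
    (hL : ∀ α ∈ L, α ≠ 0 → Set.ncard (suppSet α) ≠ 1)
    (F G : Set ι) (hF : IsFlat L F) (hG : IsFlat L G) (hFG : F ⊆ G) :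
    ∀ p ∈ MvPolynomial.supported 𝔽 G, p ∈ bcIdealLoc L G →
      rhoMap F p ∈ MvPolynomial.supported 𝔽 F ∧ rhoMap F p ∈ bcIdealLoc L F := by
  intro p hp hmem
  constructor
  · -- `rhoMap F` sends everything into `supported 𝔽 F`.
    clear hmem hp
    induction p using MvPolynomial.induction_on with
    | C a => simpa [rhoMap] using (MvPolynomial.supported 𝔽 F).algebraMap_mem a
    | add p q hp hq => rw [map_add]; exact add_mem hp hq
    | mul_X p i hp =>
      rw [map_mul]
      refine mul_mem hp ?_
      by_cases h : i ∈ F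
      · simp only [rhoMap, aeval_X, Set.indicator_of_mem h]
        exact X_mem_supported.2 h
      · simp only [rhoMap, aeval_X, Set.indicator_of_notMem h]
        exact (MvPolynomial.supported 𝔽 F).zero_mem
  · refine Submodule.span_induction ?_ ?_ ?_ ?_ hmem
    · rintro q ⟨Cf, hC, hCG, hne, rfl⟩
      by_cases hCF : (Cf : Set ι) ⊆ F
      · have : rhoMap F (∏ f ∈ Cf.erase (Cf.max' hne), X f)
            = ∏ f ∈ Cf.erase (Cf.max' hne), (X f : MvPolynomial ι 𝔽) := by
          rw [map_prod]
          refine Finset.prod_congr rfl fun f hf => ?_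
          have hfF : f ∈ F := hCF (Finset.mem_of_mem_erase hf)
          simp [rhoMap, aeval_X, Set.indicator_of_mem hfF]
        rw [this]
        exact Ideal.subset_span ⟨Cf, hC, hCF, hne, rfl⟩
      · -- there are at least two elements of `Cf` outside `F`; one is not the max.
        have hDne : ((Cf : Set ι) \ F).Nonempty := by
          rw [Set.diff_nonempty]; exact hCF
        have hfin : ((Cf : Set ι) \ F).Finite := (Cf.finite_toSet).diff
        have h0 : 0 < ((Cf : Set ι) \ F).ncard := hDne.ncard_pos hfin
        have h1 : 1 < ((Cf : Set ι) \ F).ncard := by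
          have := hF _ hC; omega
        obtain ⟨b, hbD, hbmax⟩ := Set.exists_ne_of_one_lt_ncard h1 (Cf.max' hne)
        have hbmem : b ∈ Cf.erase (Cf.max' hne) :=
          Finset.mem_erase.2 ⟨hbmax, hbD.1⟩
        have : rhoMap F (∏ f ∈ Cf.erase (Cf.max' hne), (X f : MvPolynomial ι 𝔽)) = 0 := by
          rw [map_prod]
          refine Finset.prod_eq_zero hbmem ?_
          simp [rhoMap, aeval_X, Set.indicator_of_notMem hbD.2]
        rw [this]; exact (bcIdealLoc L F).zero_mem
    · simp only [map_zero]; exact (bcIdealLoc L F).zero_mem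
    · intro x y _ _ hx hy; rw [map_add]; exact add_mem hx hy
    · intro a x _ hx
      rw [smul_eq_mul, map_mul]
      exact Ideal.mul_mem_left _ _ hx

end
end

section
/- For any flats F ⊆ G of the matroid M_{A^!}, the map ρ_{FG} : 𝔽[x_e : e ∈ G] → 𝔽[x_e : e ∈ F] sending x_e ↦ 0 for e ∈ G∖F and x_e ↦ x_e for e ∈ F maps Q_-(A^{E∖G}) into Q_-(A^{E∖F}). -/
open MvPolynomial

noncomputable section

variable {𝔽 : Type*} {ι : Type*}

/-- The constant-coefficient differential operator `D_α = ∑ α_e ∂/∂x_e`. -/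
def dOp [CommSemiring 𝔽] [Fintype ι] (α : ι → 𝔽) : Module.End 𝔽 (MvPolynomial ι 𝔽) :=
  ∑ e, α e • (pderiv e).toLinearMap

/-- `Q_-(A^{E∖F}) ⊆ 𝔽[x_e : e ∈ F]`: the polynomials supported on `F` killed by
`D_α^{m(α)-1}` for every nonzero `α ∈ L ∩ 𝔽^F`. -/
def QminusLoc [CommSemiring 𝔽] [Fintype ι] (L : Submodule 𝔽 (ι → 𝔽)) (F : Set ι) :
    Set (MvPolynomial ι 𝔽) :=
  {f | f ∈ MvPolynomial.supported 𝔽 F ∧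
    ∀ α ∈ L, α ≠ 0 → (∀ e ∉ F, α e = 0) → ((dOp α) ^ (mSize α - 1)) f = 0}

lemma rhoMap_X [CommSemiring 𝔽] (F : Set ι) (n : ι) :
    rhoMap F (X n : MvPolynomial ι 𝔽) = F.indicator (fun e => X e) n :=
  aeval_X _ _

lemma rho_mem_supported [CommSemiring 𝔽] (F : Set ι) (f : MvPolynomial ι 𝔽) :
    rhoMap F f ∈ MvPolynomial.supported 𝔽 F := by
  induction f using MvPolynomial.induction_on with
  | C a => simpa [rhoMap] using Subalgebra.algebraMap_mem (MvPolynomial.supported 𝔽 F) a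
  | add p q hp hq => simpa [map_add] using Subalgebra.add_mem _ hp hq
  | mul_X p n hp =>
    rw [map_mul]
    refine Subalgebra.mul_mem _ hp ?_
    by_cases hn : n ∈ F
    · rw [rhoMap_X, Set.indicator_of_mem hn]
      exact Algebra.subset_adjoin ⟨n, hn, rfl⟩
    · simp [rhoMap, Set.indicator_of_notMem hn]

lemma rho_pderiv [CommSemiring 𝔽] {F : Set ι} {e : ι} (he : e ∈ F)
    (f : MvPolynomial ι 𝔽) :
    pderiv e (rhoMap F f) = rhoMap F (pderiv e f) := by
  classical
  induction f using MvPolynomial.induction_on with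
  | C a => simp [rhoMap]
  | add p q hp hq => simp [map_add, hp, hq]
  | mul_X p n hp =>
    by_cases hn : n ∈ F
    · by_cases hne : n = e
      · subst hne
        simp [map_mul, rhoMap_X, Set.indicator_of_mem hn, pderiv_mul, hp]
      · simp [map_mul, rhoMap_X, Set.indicator_of_mem hn, pderiv_mul, hp,
          pderiv_X_of_ne hne]
    · have hne : n ≠ e := fun h => hn (h ▸ he)
      simp [map_mul, rhoMap_X, Set.indicator_of_notMem hn, pderiv_mul, hp,
        pderiv_X_of_ne hne]

lemma rho_dOp [CommSemiring 𝔽] [Fintype ι] {F : Set ι} {α : ι → 𝔽}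
    (hα : ∀ e ∉ F, α e = 0) (f : MvPolynomial ι 𝔽) :
    dOp α (rhoMap F f) = rhoMap F (dOp α f) := by
  simp only [dOp, LinearMap.sum_apply, LinearMap.smul_apply, map_sum]
  refine Finset.sum_congr rfl fun e _ => ?_
  by_cases he : e ∈ F
  · show α e • pderiv e (rhoMap F f) = rhoMap F (α e • pderiv e f)
    rw [rho_pderiv he, map_smul]
  · simp [hα e he]

/-- for flats `F ⊆ G` of `M_{A^!}`, the map `ρ_{FG}` carries
`Q_-(A^{E∖G})` into `Q_-(A^{E∖F})`. -/
theorem statement8 [Field 𝔽] [CharZero 𝔽] [Fintype ι] (L : Submodule 𝔽 (ι → 𝔽))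
    (F G : Set ι) (hF : IsFlat L F) (hG : IsFlat L G) (hFG : F ⊆ G) :
    ∀ f ∈ QminusLoc L G, rhoMap F f ∈ QminusLoc L F := by
  rintro f ⟨hfG, hfD⟩
  refine ⟨rho_mem_supported F f, fun α hαL hα0 hαF => ?_⟩
  have hpow : ∀ n : ℕ, ((dOp α) ^ n) (rhoMap F f) = rhoMap F (((dOp α) ^ n) f) := by
    intro n
    induction n with
    | zero => simp
    | succ n ih =>
        rw [pow_succ', Module.End.mul_apply, ih, rho_dOp hαF]
        rfl
  rw [hpow, hfD α hαL hα0 (fun e he => hαF e (fun h => he (hFG h))), map_zero]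


end
end
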